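/- arXiv:2409.13541 — 2 statements merged into one kernel-verified Lean document; each statement's English description precedes it below -/
import Mathlib

section
/- For any graph state input to a fusion with green failure, the probability of fusion success is exactly 1/2. Formally: let F_s, F_f : ℂ²⊗ℂ² → ℂ be the success and failure Kraus effects of a green-failure fusion, F_s = (1/√2)(⟨0|⊗⟨0| e^{i(θ₁+θ₂)} + (−1)^k ⟨1|⊗⟨1|) and F_f = ⟨z_k| ⊗ ⟨z_{1−k}| with ⟨z_0| = (⟨0| + e^{iθ₁}⟨1|)/√2-type XY-plane effects, applied to the two unmeasured-qubit subsystems of a state of the form (Z-spider ⊗ Z-spider) purification; then summing |F_s applied|² over outcomes k ∈ {0,1} yields 1/2 of the norm, independent of the graph state. -/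
open scoped Classical
open Complex

/-- Amplitude of the graph state `|G⟩` of a simple graph `G` at a computational
basis configuration `z`: `(1/√(2^n))·(−1)^{#edges of G with both endpoints 1}`. -/
noncomputable def graphStateAmp {V : Type*} [Fintype V] (G : SimpleGraph V)
    (z : V → Fin 2) : ℂ :=
  ((1 / Real.sqrt (2 ^ Fintype.card V) : ℝ) : ℂ) *
    (-1 : ℂ) ^ ((Finset.univ.filter
      fun e : Sym2 V => e ∈ G.edgeSet ∧ ∀ w ∈ e, z w = 1).card)

/-- The success Kraus effect of a fusion with green failure, with Pauli-error
outcome `k`:  `F_s^{(k)} = (1/√2)(e^{i(θ₁+θ₂)}⟨0|⊗⟨0| + (−1)^k ⟨1|⊗⟨1|)`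
(a Z-diagonal effect on the two fused qubits). -/
noncomputable def greenSuccessEff (θ₁ θ₂ : ℝ) (k : Fin 2) (a b : Fin 2) : ℂ :=
  ((1 / Real.sqrt 2 : ℝ) : ℂ) *
    (if a = 0 ∧ b = 0 then Complex.exp (Complex.I * (θ₁ + θ₂))
     else if a = 1 ∧ b = 1 then (-1 : ℂ) ^ (k : ℕ) else 0)

/-!
The success effect is diagonal in the computational basis of the two fused qubits, with weight
`1/2` on `z u = z v` whatever the phases and the Pauli outcome, while every graph-state amplitude
has modulus `2^{-n/2}`. So each outcome `k` succeeds with probability `1/2` times the fraction of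
configurations with `z u = z v`, which is `1/2`, and the two outcomes add up to `1/2`.
-/

open Finset

lemma norm_ofReal_one_div_sqrt_sq {x : ℝ} (hx : 0 ≤ x) :
    ‖((1 / Real.sqrt x : ℝ) : ℂ)‖ ^ 2 = 1 / x := by
  rw [Complex.norm_real, Real.norm_eq_abs, sq_abs, div_pow, one_pow, Real.sq_sqrt hx]

lemma norm_sq_graphStateAmp {V : Type*} [Fintype V] (G : SimpleGraph V) (z : V → Fin 2) :
    ‖graphStateAmp G z‖ ^ 2 = 1 / 2 ^ Fintype.card V := by
  rw [graphStateAmp, norm_mul, mul_pow, norm_ofReal_one_div_sqrt_sq (by positivity)]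
  simp

lemma norm_sq_greenSuccessEff (θ₁ θ₂ : ℝ) (k a b : Fin 2) :
    ‖greenSuccessEff θ₁ θ₂ k a b‖ ^ 2 = if a = b then 1 / 2 else 0 := by
  have hphase : ‖Complex.exp (Complex.I * (θ₁ + θ₂))‖ = 1 := by
    rw [mul_comm]
    exact_mod_cast Complex.norm_exp_ofReal_mul_I (θ₁ + θ₂)
  rw [greenSuccessEff, norm_mul, mul_pow, norm_ofReal_one_div_sqrt_sq zero_le_two]
  fin_cases a <;> fin_cases b <;> simp [hphase]

def equivFunOnNe {V α : Type*} [DecidableEq V] {u v : V} (huv : u ≠ v) :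
    {z : V → α // z u = z v} ≃ ({w // w ≠ v} → α) where
  toFun z w := z.1 w
  invFun f := ⟨fun w => if h : w = v then f ⟨u, huv⟩ else f ⟨w, h⟩, by simp [huv]⟩
  left_inv z := by
    ext w
    by_cases h : w = v
    · subst h
      simp [z.2]
    · simp [h]
  right_inv f := by
    ext ⟨w, h⟩
    simp [h]

lemma card_filter_apply_eq_apply {V α : Type*} [Fintype V] [DecidableEq V] [Fintype α]
    [DecidableEq α] {u v : V} (huv : u ≠ v) :
    #{z : V → α | z u = z v} = Fintype.card α ^ (Fintype.card V - 1) := by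
  rw [← Fintype.card_subtype, Fintype.card_congr (equivFunOnNe huv), Fintype.card_fun,
    Fintype.card_subtype_compl, Fintype.card_subtype_eq]

/-- For any graph state input (two distinct unmeasured qubits `u, v` of an
arbitrary graph state `|G⟩`), the probability of success of a fusion with green
failure — the sum over outcomes `k ∈ {0,1}` of the squared norms of the
post-selected branches — is exactly `1/2`, independent of the graph state. -/
theorem green_fusion_success_prob_half {V : Type*} [Fintype V]
    (G : SimpleGraph V) (u v : V) (huv : u ≠ v) (θ₁ θ₂ : ℝ) :
    (∑ k : Fin 2, ∑ z : V → Fin 2,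
        ‖greenSuccessEff θ₁ θ₂ k (z u) (z v) * graphStateAmp G z‖ ^ 2) = 1 / 2 := by
  have hn : 1 ≤ Fintype.card V := Fintype.card_pos_iff.mpr ⟨u⟩
  have hcount : (#{z : V → Fin 2 | z u = z v} : ℝ) = 2 ^ Fintype.card V / 2 := by
    rw [card_filter_apply_eq_apply huv, Fintype.card_fin, Nat.cast_pow, Nat.cast_ofNat,
      pow_sub₀ _ two_ne_zero hn, pow_one, div_eq_mul_inv]
  simp_rw [norm_mul, mul_pow, norm_sq_greenSuccessEff, norm_sq_graphStateAmp, ite_mul, zero_mul,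
    ← sum_filter, sum_const, nsmul_eq_mul, hcount]
  field_simp
  norm_num
end

section
/- (Pivot preserves Pauli flow) Let (G,I,O,λ) be a labelled open graph with Pauli flow and (u,v) ∈ E with u,v ∉ I∪O. The pivot G∧uv := ((G⋆u)⋆v)⋆u, with measurement labels at u,v and their neighbours updated by the standard pivot rule (XY↔YZ at u and v; XZ fixed; X↔Z; Y→Y; at common/exclusive neighbours Z↔Z etc. per conjugation by H on u and v and Z on common neighbours), has Pauli flow. -/
open scoped Classical

/-- Measurement labels: planes XY, XZ, YZ and Pauli bases X, Y, Z. -/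
inductive MeasLabel : Type
  | XY | XZ | YZ | X | Y | Z
  deriving DecidableEq

/-- The odd neighbourhood `Odd(K) = {u : |N(u) ∩ K| odd}` of a set of vertices. -/
noncomputable def oddNbhd {V : Type*} [Fintype V] (G : SimpleGraph V) (K : Finset V) :
    Finset V :=
  Finset.univ.filter fun u => Odd (K.filter fun w => G.Adj u w).card

/-- `(p, lt)` is a Pauli flow for the labelled open graph `(G, I, O, lam)`:
`lt` is a strict partial order and conditions 1–9 of the definition of Pauli
flow hold for every non-output vertex (with `p v ⊆ V ∖ I`). -/
noncomputable def IsPauliFlow {V : Type*} [Fintype V] (G : SimpleGraph V)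
    (I O : Finset V) (lam : V → MeasLabel) (p : V → Finset V)
    (lt : V → V → Prop) : Prop :=
  (∀ v, ¬ lt v v) ∧ (∀ a b c, lt a b → lt b c → lt a c) ∧
  ∀ v, v ∉ O →
    ((∀ w ∈ p v, w ∉ I) ∧
     (∀ w ∈ p v, lam w ≠ .X → lam w ≠ .Y → v ≠ w → lt v w) ∧
     (∀ w ∈ oddNbhd G (p v), lam w ≠ .Y → lam w ≠ .Z → v ≠ w → lt v w) ∧
     (∀ w, (lt w v ∨ w = v) → lam w = .Y → v ≠ w →
        (w ∈ p v ↔ w ∈ oddNbhd G (p v))) ∧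
     (lam v = .XY → v ∉ p v ∧ v ∈ oddNbhd G (p v)) ∧
     (lam v = .XZ → v ∈ p v ∧ v ∈ oddNbhd G (p v)) ∧
     (lam v = .YZ → v ∈ p v ∧ v ∉ oddNbhd G (p v)) ∧
     (lam v = .X → v ∈ oddNbhd G (p v)) ∧
     (lam v = .Z → v ∈ p v) ∧
     (lam v = .Y →
        ((v ∉ p v ∧ v ∈ oddNbhd G (p v)) ∨ (v ∈ p v ∧ v ∉ oddNbhd G (p v)))))

/-- A labelled open graph has Pauli flow if some `(p, lt)` is a Pauli flow. -/
noncomputable def HasPauliFlow {V : Type*} [Fintype V] (G : SimpleGraph V)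
    (I O : Finset V) (lam : V → MeasLabel) : Prop :=
  ∃ p lt, IsPauliFlow G I O lam p lt

/-- Local complementation of `G` at `u`: toggle all edges within `N(u)`. -/
def localComp {V : Type*} (G : SimpleGraph V) (u : V) : SimpleGraph V where
  Adj v w := v ≠ w ∧ Xor' (G.Adj v w) (G.Adj u v ∧ G.Adj u w)
  symm := ⟨by
    intro v w h
    obtain ⟨hne, hx⟩ := h
    refine ⟨hne.symm, ?_⟩
    rwa [G.adj_comm v w, and_comm] at hx⟩
  loopless := ⟨fun v h => h.1 rfl⟩

/-- Pivot of `G` about the edge `(u, v)`: `G∧uv := ((G⋆u)⋆v)⋆u`. -/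
def pivot {V : Type*} (G : SimpleGraph V) (u v : V) : SimpleGraph V :=
  localComp (localComp (localComp G u) v) u

/-- Label update at `u` and `v` under pivoting (conjugation by Hadamard):
`XY ↔ YZ`, `XZ` fixed, `X ↔ Z`, `Y → Y`.  Neighbours are conjugated by Pauli
`Z`, which leaves measurement labels unchanged. -/
def pivotLabel : MeasLabel → MeasLabel
  | .XY => .YZ | .YZ => .XY | .XZ => .XZ | .X => .Z | .Z => .X | .Y => .Y


/-!
Work over `ZMod 2` and write `N[w] = N(w) ∪ {w}`. Pivoting about the edge `uv` adds
`N[u] N[v]ᵀ + N[v] N[u]ᵀ` to the adjacency matrix. Replace each correction set `K` by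
`K + α e_u + β e_v`, where `α` and `β` are the parities of `|N[u] ∩ K|` and `|N[v] ∩ K|`.
Away from `u` and `v`, the new set and its odd neighbourhood in `G∧uv` agree with `K` and
`Odd_G(K)`; at `u` and at `v` membership in the set and in its odd neighbourhood trade places.
The label update exchanges exactly these two roles (`XY ↔ YZ`, `X ↔ Z`, while the conditions
for `XZ` and `Y` are symmetric), so the old order still witnesses a Pauli flow.
-/

open Finset

@[simp] lemma pivotLabel_eq_XY {l : MeasLabel} : pivotLabel l = .XY ↔ l = .YZ := by
  cases l <;> decide

@[simp] lemma pivotLabel_eq_XZ {l : MeasLabel} : pivotLabel l = .XZ ↔ l = .XZ := by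
  cases l <;> decide

@[simp] lemma pivotLabel_eq_YZ {l : MeasLabel} : pivotLabel l = .YZ ↔ l = .XY := by
  cases l <;> decide

@[simp] lemma pivotLabel_eq_X {l : MeasLabel} : pivotLabel l = .X ↔ l = .Z := by
  cases l <;> decide

@[simp] lemma pivotLabel_eq_Y {l : MeasLabel} : pivotLabel l = .Y ↔ l = .Y := by
  cases l <;> decide

@[simp] lemma pivotLabel_eq_Z {l : MeasLabel} : pivotLabel l = .Z ↔ l = .X := by
  cases l <;> decide

theorem IsPauliFlow.of_swap {V : Type*} [Fintype V] {G G' : SimpleGraph V} {I O : Finset V}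
    {lam : V → MeasLabel} {p p' : V → Finset V} {lt : V → V → Prop}
    {S : V → Prop} [DecidablePred S]
    (hflow : IsPauliFlow G I O lam p lt) (hSI : ∀ w, S w → w ∉ I)
    (hswap : ∀ t w, S w →
      (w ∈ p' t ↔ w ∈ oddNbhd G (p t)) ∧ (w ∈ oddNbhd G' (p' t) ↔ w ∈ p t))
    (hkeep : ∀ t w, ¬ S w →
      (w ∈ p' t ↔ w ∈ p t) ∧ (w ∈ oddNbhd G' (p' t) ↔ w ∈ oddNbhd G (p t))) :
    IsPauliFlow G' I O (fun w => if S w then pivotLabel (lam w) else lam w) p' lt := by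
  obtain ⟨hirr, htrans, hflow⟩ := hflow
  refine ⟨hirr, htrans, fun t ht => ?_⟩
  obtain ⟨hI, hP, hOdd, hYw, hXY, hXZ, hYZ, hX, hZ, hY⟩ := hflow t ht
  refine ⟨fun w hw => ?_, fun w hw => ?_, fun w hw => ?_, fun w hwt => ?_, ?_⟩
  · by_cases hS : S w
    · exact hSI w hS
    · exact hI w ((hkeep t w hS).1.mp hw)
  · by_cases hS : S w
    · simp only [if_pos hS, ne_eq, pivotLabel_eq_X, pivotLabel_eq_Y]
      exact fun hwZ hwY => hOdd w ((hswap t w hS).1.mp hw) hwY hwZ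
    · simp only [if_neg hS]
      exact hP w ((hkeep t w hS).1.mp hw)
  · by_cases hS : S w
    · simp only [if_pos hS, ne_eq, pivotLabel_eq_Y, pivotLabel_eq_Z]
      exact fun hwY hwX => hP w ((hswap t w hS).2.mp hw) hwX hwY
    · simp only [if_neg hS]
      exact hOdd w ((hkeep t w hS).2.mp hw)
  · by_cases hS : S w
    · simp only [if_pos hS, pivotLabel_eq_Y, (hswap t w hS).1, (hswap t w hS).2]
      exact fun hwY htw => (hYw w hwt hwY htw).symm
    · simp only [if_neg hS, (hkeep t w hS).1, (hkeep t w hS).2]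
      exact hYw w hwt
  · by_cases hS : S t
    · simp only [if_pos hS, pivotLabel_eq_XY, pivotLabel_eq_XZ, pivotLabel_eq_YZ,
        pivotLabel_eq_X, pivotLabel_eq_Z, pivotLabel_eq_Y, (hswap t t hS).1, (hswap t t hS).2]
      exact ⟨fun h => (hYZ h).symm, fun h => (hXZ h).symm, fun h => (hXY h).symm, hZ, hX,
        fun h => (hY h).symm.imp And.symm And.symm⟩
    · simp only [if_neg hS, (hkeep t t hS).1, (hkeep t t hS).2]
      exact ⟨hXY, hXZ, hYZ, hX, hZ, hY⟩

noncomputable def ind (P : Prop) : ZMod 2 := if P then 1 else 0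

lemma ind_pos {P : Prop} (h : P) : ind P = 1 := if_pos h

lemma ind_neg {P : Prop} (h : ¬ P) : ind P = 0 := if_neg h

lemma ind_eq_ind_iff {P Q : Prop} : ind P = ind Q ↔ (P ↔ Q) := by
  by_cases hP : P <;> by_cases hQ : Q <;> simp [ind, hP, hQ]

lemma ind_eq_one_eq_self (x : ZMod 2) : ind (x = 1) = x := by
  by_cases hx : x = 1
  · rw [ind, if_pos hx, hx]
  · rw [ind, if_neg hx]
    revert x
    decide

lemma ind_odd (n : ℕ) : ind (Odd n) = n := by
  rw [← ZMod.natCast_eq_one_iff_odd, ind_eq_one_eq_self]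

section

variable {V : Type*}

lemma sum_ind_eq (K : Finset V) (w : V) : ∑ y ∈ K, ind (w = y) = ind (w ∈ K) := by
  simp [ind]

lemma localComp_adj (H : SimpleGraph V) (w a b : V) :
    (localComp H w).Adj a b ↔ a ≠ b ∧ Xor (H.Adj a b) (H.Adj w a ∧ H.Adj w b) :=
  Iff.rfl

lemma ind_adj_localComp (H : SimpleGraph V) (w a b : V) :
    ind ((localComp H w).Adj a b)
      = ind (H.Adj a b) + ind (H.Adj w a) * ind (H.Adj w b) + ind (a = b) * ind (H.Adj w a) := by
  by_cases hab : a = b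
  · subst hab
    by_cases hwa : H.Adj w a <;> simp [ind, hwa, CharTwo.add_self_eq_zero]
  · by_cases h1 : H.Adj a b <;> by_cases h2 : H.Adj w a <;> by_cases h3 : H.Adj w b <;>
      simp [ind, localComp_adj, xor_def, hab, h1, h2, h3, CharTwo.add_self_eq_zero]

variable [Fintype V]

lemma sum_eq_sum_ind_mul (K : Finset V) (f : V → ZMod 2) :
    ∑ y ∈ K, f y = ∑ y, ind (y ∈ K) * f y := by
  simp only [ind, ite_mul, one_mul, zero_mul, sum_ite_mem, univ_inter]

lemma sum_ind_eq_mul (w : V) (f : V → ZMod 2) : ∑ y, ind (w = y) * f y = f w := by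
  simp [ind]

lemma ind_mem_oddNbhd (G : SimpleGraph V) (K : Finset V) (w : V) :
    ind (w ∈ oddNbhd G K) = ∑ y ∈ K, ind (G.Adj w y) := by
  have hodd : w ∈ oddNbhd G K ↔ Odd #(K.filter (G.Adj w)) := by simp [oddNbhd]
  rw [hodd, ind_odd]
  simp [ind, sum_boole]

lemma ind_mem_oddNbhd_localComp (H : SimpleGraph V) (w : V) (K : Finset V) (a : V) :
    ind (a ∈ oddNbhd (localComp H w) K)
      = ind (a ∈ oddNbhd H K) + ind (H.Adj w a) * (ind (w ∈ oddNbhd H K) + ind (a ∈ K)) := by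
  simp only [ind_mem_oddNbhd, ind_adj_localComp, sum_add_distrib, ← mul_sum, ← sum_mul,
    sum_ind_eq]
  ring

/-- The parity of `|N[w] ∩ K|`, where `N[w] = N(w) ∪ {w}` is the closed neighbourhood. -/
noncomputable def closedParity (G : SimpleGraph V) (K : Finset V) (w : V) : ZMod 2 :=
  ind (w ∈ oddNbhd G K) + ind (w ∈ K)

lemma ind_mem_oddNbhd_pivot {G : SimpleGraph V} {u v : V} (huv : G.Adj u v) (K : Finset V)
    (a : V) :
    ind (a ∈ oddNbhd (pivot G u v) K)
      = ind (a ∈ oddNbhd G K) + (ind (G.Adj u a) + ind (u = a)) * closedParity G K v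
          + (ind (G.Adj v a) + ind (v = a)) * closedParity G K u := by
  simp only [pivot, closedParity, ind_mem_oddNbhd_localComp, ind_adj_localComp,
    ind_neg (G.irrefl (v := u)), ind_pos huv, ind_pos huv.symm, ind_neg huv.ne.symm]
  by_cases hua : u = a
  · subst hua
    simp only [ind_neg (G.irrefl (v := u))]
    grind
  · by_cases hva : v = a
    · subst hva
      simp only [ind_neg (G.irrefl (v := v)), ind_neg huv.ne]
      grind
    · simp only [ind_neg hua, ind_neg hva]
      grind

noncomputable def pivotCorrection (G : SimpleGraph V) (u v : V) (K : Finset V) : Finset V :=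
  univ.filter fun w =>
    ind (w ∈ K) + closedParity G K u * ind (u = w) + closedParity G K v * ind (v = w) = 1

section PivotCorrection

variable (G : SimpleGraph V) (u v : V) (K : Finset V)

lemma ind_mem_pivotCorrection (w : V) :
    ind (w ∈ pivotCorrection G u v K)
      = ind (w ∈ K) + closedParity G K u * ind (u = w) + closedParity G K v * ind (v = w) := by
  simp only [pivotCorrection, mem_filter, mem_univ, true_and, ind_eq_one_eq_self]

lemma sum_pivotCorrection (f : V → ZMod 2) :
    ∑ y ∈ pivotCorrection G u v K, f y
      = ∑ y ∈ K, f y + closedParity G K u * f u + closedParity G K v * f v := by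
  simp only [sum_eq_sum_ind_mul (pivotCorrection G u v K), ind_mem_pivotCorrection, add_mul,
    sum_add_distrib, mul_assoc, ← mul_sum, ← sum_eq_sum_ind_mul, sum_ind_eq_mul]

lemma ind_mem_oddNbhd_pivotCorrection (w : V) :
    ind (w ∈ oddNbhd G (pivotCorrection G u v K))
      = ind (w ∈ oddNbhd G K) + closedParity G K u * ind (G.Adj w u)
          + closedParity G K v * ind (G.Adj w v) := by
  rw [ind_mem_oddNbhd, sum_pivotCorrection, ind_mem_oddNbhd]

variable {G u v}

lemma closedParity_pivotCorrection_left (huv : G.Adj u v) :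
    closedParity G (pivotCorrection G u v K) u = closedParity G K v := by
  simp only [closedParity, ind_mem_oddNbhd_pivotCorrection, ind_mem_pivotCorrection,
    ind_pos trivial, ind_neg (G.irrefl (v := u)), ind_pos huv, ind_neg huv.ne.symm]
  grind

lemma closedParity_pivotCorrection_right (huv : G.Adj u v) :
    closedParity G (pivotCorrection G u v K) v = closedParity G K u := by
  simp only [closedParity, ind_mem_oddNbhd_pivotCorrection, ind_mem_pivotCorrection,
    ind_pos trivial, ind_neg (G.irrefl (v := v)), ind_pos huv.symm, ind_neg huv.ne]
  grind

lemma ind_mem_oddNbhd_pivot_pivotCorrection (huv : G.Adj u v) (a : V) :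
    ind (a ∈ oddNbhd (pivot G u v) (pivotCorrection G u v K))
      = ind (a ∈ oddNbhd G K) + closedParity G K u * ind (u = a)
          + closedParity G K v * ind (v = a) := by
  rw [ind_mem_oddNbhd_pivot huv, closedParity_pivotCorrection_left K huv,
    closedParity_pivotCorrection_right K huv, ind_mem_oddNbhd_pivotCorrection, G.adj_comm a u,
    G.adj_comm a v]
  grind

lemma pivotCorrection_swap (huv : G.Adj u v) {w : V} (hw : w = u ∨ w = v) :
    (w ∈ pivotCorrection G u v K ↔ w ∈ oddNbhd G K)
      ∧ (w ∈ oddNbhd (pivot G u v) (pivotCorrection G u v K) ↔ w ∈ K) := by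
  simp only [← ind_eq_ind_iff, ind_mem_pivotCorrection,
    ind_mem_oddNbhd_pivot_pivotCorrection K huv, closedParity]
  rcases hw with rfl | rfl
  · simp only [ind_pos trivial, ind_neg huv.ne.symm]
    grind
  · simp only [ind_pos trivial, ind_neg huv.ne]
    grind

lemma pivotCorrection_keep (huv : G.Adj u v) {w : V} (hw : ¬ (w = u ∨ w = v)) :
    (w ∈ pivotCorrection G u v K ↔ w ∈ K)
      ∧ (w ∈ oddNbhd (pivot G u v) (pivotCorrection G u v K) ↔ w ∈ oddNbhd G K) := by
  simp only [← ind_eq_ind_iff, ind_mem_pivotCorrection,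
    ind_mem_oddNbhd_pivot_pivotCorrection K huv]
  push Not at hw
  simp only [ind_neg hw.1.symm, ind_neg hw.2.symm, mul_zero, add_zero, and_self]

end PivotCorrection

end

/-- Pivot preserves Pauli flow: if `(G, I, O, lam)` has Pauli flow and
`(u, v)` is an edge with `u, v ∉ I ∪ O`, then the pivoted graph `G∧uv` with
labels updated by the standard pivot rule has Pauli flow. -/
theorem pivot_preserves_pauliFlow {V : Type*} [Fintype V]
    (G : SimpleGraph V) (I O : Finset V) (lam : V → MeasLabel)
    (u v : V) (huv : G.Adj u v) (hu : u ∉ I ∪ O) (hv : v ∉ I ∪ O)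
    (h : HasPauliFlow G I O lam) :
    HasPauliFlow (pivot G u v) I O
      (fun w => if w = u ∨ w = v then pivotLabel (lam w) else lam w) := by
  obtain ⟨p, lt, hflow⟩ := h
  refine ⟨fun t => pivotCorrection G u v (p t), lt, hflow.of_swap ?_ ?_ ?_⟩
  · rintro w (rfl | rfl)
    · exact fun hI => hu (mem_union_left O hI)
    · exact fun hI => hv (mem_union_left O hI)
  · exact fun t w hw => pivotCorrection_swap (p t) huv hw
  · exact fun t w hw => pivotCorrection_keep (p t) huv hw
end
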